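/- If G is a connected graph and x ∈ V(G) has a neighbor, then γ_c(G) ≤ γ_cg(G|x) + 1, and consequently γ_cg(G|x) ≥ (γ_cg(G) − 1)/2. -/

import Mathlib

open Finset

namespace ConnDomGame

variable {V : Type*} [Fintype V] [DecidableEq V]

/-- The closed neighborhood of a finite set of vertices. -/
def nbhd (G : SimpleGraph V) [DecidableRel G.Adj] (D : Finset V) : Finset V :=
  univ.filter fun u => u ∈ D ∨ ∃ v ∈ D, G.Adj u v

/-- The legal moves in the connected domination game on `G` with predominated set `S`,
from the position where the set of played vertices is `D`: a legal move must dominate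
a not-yet-dominated vertex and (except for the first move) be adjacent to a played vertex. -/
def legalMoves (G : SimpleGraph V) [DecidableRel G.Adj] (S D : Finset V) : Finset V :=
  univ.filter fun v =>
    ¬ (nbhd G {v} ⊆ S ∪ nbhd G D) ∧ (D = ∅ ∨ ∃ u ∈ D, G.Adj v u)

/-- Optimal number of further moves in the connected domination game on `G` with
predominated set `S`, from the position with played set `D`; `turn = true` means
Dominator (the minimizer) is to move.  The value is `⊤` if the player to move can
force the game to get stuck with an undominated vertex remaining.  The fuel
argument `n` is sufficient whenever `n + D.card ≥ Fintype.card V`. -/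
noncomputable def val (G : SimpleGraph V) [DecidableRel G.Adj] (S : Finset V) :
    Bool → ℕ → Finset V → ℕ∞
  | _, 0, D => if univ ⊆ S ∪ nbhd G D then 0 else ⊤
  | turn, n + 1, D =>
    if h : (legalMoves G S D).Nonempty then
      if turn then
        1 + (legalMoves G S D).inf' h fun v => val G S false n (insert v D)
      else
        1 + (legalMoves G S D).sup' h fun v => val G S true n (insert v D)
    else if univ ⊆ S ∪ nbhd G D then 0 else ⊤

/-- The Dominator-start game connected domination number of `G` with the vertices of `S`
predominated (`γ_cg(G|S)`; for `S = ∅` this is `γ_cg(G)`). -/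
noncomputable def gammaCG (G : SimpleGraph V) [DecidableRel G.Adj] (S : Finset V) : ℕ∞ :=
  val G S true (Fintype.card V) ∅

/-- The Staller-start game connected domination number of `G` with `S` predominated. -/
noncomputable def gammaCG' (G : SimpleGraph V) [DecidableRel G.Adj] (S : Finset V) : ℕ∞ :=
  val G S false (Fintype.card V) ∅

/-- The connected domination number of `G` with the set `S` predominated:
minimum size of a set `D` inducing a connected subgraph and dominating all
vertices outside `S`. -/
noncomputable def gammaC (G : SimpleGraph V) (S : Finset V) : ℕ :=
  sInf {k | ∃ D : Finset V, D.card = k ∧ (G.induce (D : Set V)).Connected ∧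
    ∀ u, u ∈ S ∨ u ∈ D ∨ ∃ v ∈ D, G.Adj u v}

/-- `l` is a legal sequence of first moves of the connected domination game on `G`
with predominated set `S`. -/
def LegalSeq (G : SimpleGraph V) [DecidableRel G.Adj] (S : Finset V) (l : List V) : Prop :=
  ∀ i (h : i < l.length), l.get ⟨i, h⟩ ∈ legalMoves G S (l.take i).toFinset

end ConnDomGame

namespace ConnDomGame

set_option linter.unusedSectionVars false
set_option linter.unnecessarySimpa false

variable {V : Type*} [Fintype V] [DecidableEq V] (G : SimpleGraph V) [DecidableRel G.Adj]

lemma mem_nbhd {D : Finset V} {u : V} : u ∈ nbhd G D ↔ u ∈ D ∨ ∃ v ∈ D, G.Adj u v := by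
  simp [nbhd]
lemma nbhd_singleton_subset {D : Finset V} {v : V} (hv : v ∈ D) :
    nbhd G {v} ⊆ nbhd G D := by
  intro u hu
  rw [mem_nbhd] at hu ⊢
  rcases hu with h1 | ⟨w, hw, hadj⟩
  · exact Or.inl (by rwa [Finset.mem_singleton.mp h1])
  · exact Or.inr ⟨v, hv, by rwa [Finset.mem_singleton.mp hw] at hadj⟩
lemma mem_legalMoves {S D : Finset V} {v : V} :
    v ∈ legalMoves G S D ↔
      ¬ (nbhd G {v} ⊆ S ∪ nbhd G D) ∧ (D = ∅ ∨ ∃ u ∈ D, G.Adj v u) := by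
  simp [legalMoves]
lemma not_mem_of_legal {S D : Finset V} {v : V} (h : v ∈ legalMoves G S D) : v ∉ D := by
  intro hvD
  exact ((mem_legalMoves G).mp h).1 ((nbhd_singleton_subset G hvD).trans Finset.subset_union_right)
lemma legalMoves_eq_empty {S D : Finset V} (h : univ ⊆ S ∪ nbhd G D) :
    legalMoves G S D = ∅ := by
  rw [Finset.eq_empty_iff_forall_notMem]
  intro v hv
  exact ((mem_legalMoves G).mp hv).1 ((Finset.subset_univ _).trans h)
lemma val_of_dominated {S D : Finset V} {turn : Bool} {n : ℕ}
    (h : univ ⊆ S ∪ nbhd G D) : val G S turn n D = 0 := by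
  cases n with
  | zero => simp [val, h]
  | succ n => simp [val, legalMoves_eq_empty G h, h]
lemma induce_singleton_connected (v : V) : (G.induce ({v} : Set V)).Connected := by
  have : Nonempty ({v} : Set V) := ⟨⟨v, rfl⟩⟩
  exact ⟨fun a b => by
    have : a = b := Subtype.ext (a.2.trans b.2.symm)
    exact this ▸ SimpleGraph.Reachable.refl _⟩
lemma induce_connected_insert {D : Finset V} {v u : V} (hu : u ∈ D)
    (hc : (G.induce (D : Set V)).Connected) (hadj : G.Adj v u) :
    (G.induce ((insert v D : Finset V) : Set V)).Connected := by
  rw [Finset.coe_insert]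
  have hsub : (D : Set V) ⊆ insert v (D : Set V) := Set.subset_insert _ _
  have hu' : u ∈ insert v (D : Set V) := Set.mem_insert_of_mem _ hu
  have hne : Nonempty ↥(insert v (D : Set V)) := ⟨⟨u, hu'⟩⟩
  have key : ∀ a : ↥(insert v (D : Set V)),
      (G.induce (insert v (D : Set V))).Reachable a ⟨u, hu'⟩ := by
    rintro ⟨w, hw⟩
    rcases Set.mem_insert_iff.mp hw with rfl | hwD
    · exact SimpleGraph.Adj.reachable (by simpa using hadj)
    · have hr := hc.preconnected ⟨w, hwD⟩ ⟨u, hu⟩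
      have h2 := hr.map (G.induceHomOfLE hsub).toHom
      exact h2
  exact ⟨fun a b => (key a).trans (key b).symm⟩

/-- Extraction lemma: a finite game value yields a connected dominating-outside-`S` set. -/
lemma exists_cds (S : Finset V) :
    ∀ (n : ℕ) (turn : Bool) (D : Finset V) (k : ℕ),
      (D = ∅ ∨ (G.induce (D : Set V)).Connected) →
      val G S turn n D ≤ (k : ℕ∞) →
      ∃ D' : Finset V, D ⊆ D' ∧ D'.card ≤ D.card + k ∧
        (D' = ∅ ∨ (G.induce (D' : Set V)).Connected) ∧ univ ⊆ S ∪ nbhd G D' := by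
  intro n
  induction n with
  | zero =>
    intro turn D k hD hval
    by_cases hdom : univ ⊆ S ∪ nbhd G D
    · exact ⟨D, Finset.Subset.refl D, Nat.le_add_right _ _, hD, hdom⟩
    · rw [val, if_neg hdom] at hval
      exact absurd (top_le_iff.mp hval) (ENat.coe_ne_top k)
  | succ n ih =>
    intro turn D k hD hval
    by_cases hleg : (legalMoves G S D).Nonempty
    · -- insert-lemma for invariant
      have hins : ∀ v ∈ legalMoves G S D,
          (insert v D = ∅ ∨ (G.induce ((insert v D : Finset V) : Set V)).Connected) := by
        intro v hv
        rcases ((mem_legalMoves G).mp hv).2 with rfl | ⟨u, hu, hadj⟩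
        · right
          have : ((insert v (∅ : Finset V) : Finset V) : Set V) = {v} := by simp
          rw [this]
          exact induce_singleton_connected G v
        · right
          have hDne : D ≠ ∅ := Finset.ne_empty_of_mem hu
          exact induce_connected_insert G hu (hD.resolve_left hDne) hadj
      rw [val, dif_pos hleg] at hval
      cases k with
      | zero =>
        exfalso
        cases turn with
        | true =>
          rw [if_pos rfl] at hval
          have h1 : (1 : ℕ∞) ≤ ((0:ℕ) : ℕ∞) := le_trans le_self_add hval
          simp at h1
        | false =>
          rw [if_neg (by simp)] at hval
          have h1 : (1 : ℕ∞) ≤ ((0:ℕ) : ℕ∞) := le_trans le_self_add hval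
          simp at h1
      | succ k' =>
        have hcast : ((k' + 1 : ℕ) : ℕ∞) = 1 + (k' : ℕ∞) := by push_cast; ring
        cases turn with
        | true =>
          rw [if_pos rfl, hcast] at hval
          have hinf := (WithTop.add_le_add_iff_left (by simp : (1:ℕ∞) ≠ ⊤)).mp hval
          obtain ⟨v, hv, hvle⟩ := (Finset.inf'_le_iff hleg).mp hinf
          obtain ⟨D', h1, h2, h3, h4⟩ := ih false (insert v D) k' (hins v hv) hvle
          refine ⟨D', (Finset.subset_insert v D).trans h1, ?_, h3, h4⟩
          calc D'.card ≤ (insert v D).card + k' := h2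
            _ ≤ D.card + 1 + k' := by
                have := Finset.card_insert_le v D; omega
            _ = D.card + (k' + 1) := by ring
        | false =>
          rw [if_neg (by simp), hcast] at hval
          have hsup := (WithTop.add_le_add_iff_left (by simp : (1:ℕ∞) ≠ ⊤)).mp hval
          obtain ⟨v, hv⟩ := hleg
          have hvle : val G S true n (insert v D) ≤ (k' : ℕ∞) :=
            le_trans (Finset.le_sup' (fun v => val G S true n (insert v D)) hv) hsup
          obtain ⟨D', h1, h2, h3, h4⟩ := ih true (insert v D) k' (hins v hv) hvle
          refine ⟨D', (Finset.subset_insert v D).trans h1, ?_, h3, h4⟩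
          calc D'.card ≤ (insert v D).card + k' := h2
            _ ≤ D.card + 1 + k' := by
                have := Finset.card_insert_le v D; omega
            _ = D.card + (k' + 1) := by ring
    · rw [val, dif_neg hleg] at hval
      by_cases hdom : univ ⊆ S ∪ nbhd G D
      · exact ⟨D, Finset.Subset.refl D, Nat.le_add_right _ _, hD, hdom⟩
      · rw [if_neg hdom] at hval
        exact absurd (top_le_iff.mp hval) (ENat.coe_ne_top k)
lemma walk_pred {W : Type*} {H : SimpleGraph W} (P : W → Prop) :
    ∀ {a b : W}, H.Walk a b → ¬ P a → P b → ∃ c d, H.Adj c d ∧ ¬ P c ∧ P d := by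
  intro a b w
  induction w with
  | nil => exact fun h1 h2 => absurd h2 h1
  | @cons a' v' b' h p ih =>
    intro h1 h2
    by_cases hm : P v'
    · exact ⟨a', v', h, h1, hm⟩
    · exact ih hm h2

lemma exists_legal (T : Finset V) (hTc : (G.induce (T : Set V)).Connected)
    (hTd : ∀ u, u ∈ T ∨ ∃ v ∈ T, G.Adj u v)
    {D : Finset V} (hD : D = ∅ ∨ (D ∩ T).Nonempty)
    (hndom : ¬ univ ⊆ ∅ ∪ nbhd G D) :
    ∃ t ∈ T, t ∈ legalMoves G ∅ D ∧ t ∉ D := by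
  rw [Finset.empty_union] at hndom
  obtain ⟨u, -, hu⟩ := Finset.not_subset.mp hndom
  obtain ⟨t, htT, hut⟩ : ∃ t ∈ T, u ∈ nbhd G {t} := by
    rcases hTd u with h | ⟨v, hv, hadj⟩
    · exact ⟨u, h, by rw [mem_nbhd]; exact Or.inl (Finset.mem_singleton_self u)⟩
    · exact ⟨v, hv, by rw [mem_nbhd]; exact Or.inr ⟨v, Finset.mem_singleton_self v, hadj⟩⟩
  have hPt : ¬ nbhd G {t} ⊆ nbhd G D := fun hsub => hu (hsub hut)
  rcases hD with rfl | ⟨t0, ht0⟩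
  · refine ⟨t, htT, ?_, Finset.notMem_empty t⟩
    rw [mem_legalMoves]
    exact ⟨by rwa [Finset.empty_union], Or.inl rfl⟩
  · rw [Finset.mem_inter] at ht0
    have hPt0 : ¬ ¬ nbhd G {t0} ⊆ nbhd G D := not_not.mpr (nbhd_singleton_subset G ht0.1)
    obtain ⟨w⟩ := hTc.preconnected ⟨t0, Finset.mem_coe.mpr ht0.2⟩ ⟨t, Finset.mem_coe.mpr htT⟩
    obtain ⟨c, d, hadj, hPc, hPd⟩ :=
      walk_pred (fun a : ↥(T : Set V) => ¬ nbhd G {(a : V)} ⊆ nbhd G D) w hPt0 hPt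
    have hadj' : G.Adj (c : V) (d : V) := hadj
    have hdmem : (d : V) ∈ nbhd G D := by
      have : (d : V) ∈ nbhd G {(c : V)} := by
        rw [mem_nbhd]
        exact Or.inr ⟨c, Finset.mem_singleton_self _, hadj'.symm⟩
      exact not_not.mp hPc this
    rw [mem_nbhd] at hdmem
    have hdD : (d : V) ∉ D := fun hmem => hPd (nbhd_singleton_subset G hmem)
    rcases hdmem with h | ⟨p, hp, hdp⟩
    · exact absurd h hdD
    · refine ⟨d, Finset.mem_coe.mp d.2, ?_, hdD⟩
      rw [mem_legalMoves]
      exact ⟨by rwa [Finset.empty_union], Or.inr ⟨p, hp, hdp⟩⟩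

/-- Strategy lemma: Dominator following a connected dominating set `T`. -/
lemma val_le_two_mul (T : Finset V) (hTc : (G.induce (T : Set V)).Connected)
    (hTd : ∀ u, u ∈ T ∨ ∃ v ∈ T, G.Adj u v) :
    ∀ (n : ℕ) (D : Finset V), Fintype.card V ≤ n + D.card →
      ((D = ∅ ∨ (D ∩ T).Nonempty) →
        val G ∅ true n D ≤ ((2 * (T \ D).card - 1 : ℕ) : ℕ∞)) ∧
      ((D ∩ T).Nonempty →
        val G ∅ false n D ≤ ((2 * (T \ D).card : ℕ) : ℕ∞)) := by
  intro n
  induction n with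
  | zero =>
    intro D hcard
    have hDuniv : D = univ := by
      apply Finset.eq_univ_of_card
      have h1 : D.card ≤ Fintype.card V := Finset.card_le_univ D
      omega
    have hdom : univ ⊆ ∅ ∪ nbhd G D := by
      intro u _
      rw [Finset.empty_union, mem_nbhd]
      exact Or.inl (hDuniv ▸ Finset.mem_univ u)
    refine ⟨fun _ => ?_, fun _ => ?_⟩ <;> rw [val_of_dominated G hdom] <;> exact zero_le
  | succ n ih =>
    intro D hcard
    constructor
    · intro hD
      by_cases hdom : univ ⊆ ∅ ∪ nbhd G D
      · rw [val_of_dominated G hdom]; exact zero_le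
      · obtain ⟨t, htT, htleg, htD⟩ := exists_legal G T hTc hTd hD hdom
        have hne : (legalMoves G ∅ D).Nonempty := ⟨t, htleg⟩
        have htTD : t ∈ T \ D := Finset.mem_sdiff.mpr ⟨htT, htD⟩
        have hm1 : 1 ≤ (T \ D).card := Finset.card_pos.mpr ⟨t, htTD⟩
        rw [val, dif_pos hne, if_pos rfl]
        have hfuel : Fintype.card V ≤ n + (insert t D).card := by
          rw [Finset.card_insert_of_notMem htD]; omega
        have hinv : ((insert t D) ∩ T).Nonempty :=
          ⟨t, Finset.mem_inter.mpr ⟨Finset.mem_insert_self t D, htT⟩⟩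
        have hstep := (ih (insert t D) hfuel).2 hinv
        have hcarderase : (T \ insert t D).card = (T \ D).card - 1 := by
          rw [Finset.sdiff_insert, Finset.card_erase_of_mem htTD]
        calc 1 + ((legalMoves G ∅ D).inf' hne fun v => val G ∅ false n (insert v D))
            ≤ 1 + val G ∅ false n (insert t D) := by
              exact add_le_add_right (Finset.inf'_le _ htleg) 1
          _ ≤ 1 + ((2 * (T \ insert t D).card : ℕ) : ℕ∞) := add_le_add_right hstep 1
          _ ≤ ((2 * (T \ D).card - 1 : ℕ) : ℕ∞) := by
              rw [hcarderase, show (1 : ℕ∞) = ((1:ℕ) : ℕ∞) from rfl, ← Nat.cast_add]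
              exact Nat.cast_le.mpr (by omega)
    · intro hD
      by_cases hdom : univ ⊆ ∅ ∪ nbhd G D
      · rw [val_of_dominated G hdom]; exact zero_le
      · obtain ⟨t, htT, htleg, htD⟩ := exists_legal G T hTc hTd (Or.inr hD) hdom
        have hne : (legalMoves G ∅ D).Nonempty := ⟨t, htleg⟩
        have htTD : t ∈ T \ D := Finset.mem_sdiff.mpr ⟨htT, htD⟩
        have hm1 : 1 ≤ (T \ D).card := Finset.card_pos.mpr ⟨t, htTD⟩
        rw [val, dif_pos hne, if_neg (by simp)]
        have hsup : ((legalMoves G ∅ D).sup' hne fun v => val G ∅ true n (insert v D))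
            ≤ ((2 * (T \ D).card - 1 : ℕ) : ℕ∞) := by
          apply Finset.sup'_le
          intro v hv
          have hvD : v ∉ D := not_mem_of_legal G hv
          have hfuel : Fintype.card V ≤ n + (insert v D).card := by
            rw [Finset.card_insert_of_notMem hvD]; omega
          obtain ⟨t0, ht0⟩ := hD
          rw [Finset.mem_inter] at ht0
          have hinv : insert v D = ∅ ∨ ((insert v D) ∩ T).Nonempty :=
            Or.inr ⟨t0, Finset.mem_inter.mpr ⟨Finset.mem_insert_of_mem ht0.1, ht0.2⟩⟩
          have hstep := (ih (insert v D) hfuel).1 hinv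
          refine le_trans hstep (Nat.cast_le.mpr ?_)
          have hsub : (T \ insert v D).card ≤ (T \ D).card :=
            Finset.card_le_card (Finset.sdiff_subset_sdiff (Finset.Subset.refl T)
              (Finset.subset_insert v D))
          omega
        calc 1 + ((legalMoves G ∅ D).sup' hne fun v => val G ∅ true n (insert v D))
            ≤ 1 + ((2 * (T \ D).card - 1 : ℕ) : ℕ∞) := add_le_add_right hsup 1
          _ ≤ ((2 * (T \ D).card : ℕ) : ℕ∞) := by
              rw [show (1 : ℕ∞) = ((1:ℕ) : ℕ∞) from rfl, ← Nat.cast_add]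
              exact Nat.cast_le.mpr (by omega)

end ConnDomGame

open ConnDomGame in
/-- If `x` is a non-isolated vertex of a connected graph `G`, then
`γ_c(G) ≤ γ_cg(G|x) + 1`, and consequently `γ_cg(G|x) ≥ (γ_cg(G) − 1)/2`
(the latter inequality stated in the equivalent form `γ_cg(G) − 1 ≤ 2 γ_cg(G|x)`). -/
theorem gammaC_le_gammaCG_predominated_add_one {V : Type*} [Fintype V] [DecidableEq V]
    (G : SimpleGraph V) [DecidableRel G.Adj] (hG : G.Connected)
    (x : V) (hx : ∃ y, G.Adj x y) :
    (gammaC G ∅ : ℕ∞) ≤ gammaCG G {x} + 1 ∧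
      gammaCG G ∅ - 1 ≤ 2 * gammaCG G {x} := by
  classical
  obtain ⟨y, hxy⟩ := hx
  have huniv_conn : (G.induce (((univ : Finset V) : Set V))).Connected := by
    rw [Finset.coe_univ]
    exact ((SimpleGraph.induceUnivIso G).connected_iff).mpr hG
  have hmem_univ : Fintype.card V ∈ {k | ∃ D : Finset V, D.card = k ∧
      (G.induce (D : Set V)).Connected ∧
      ∀ u, u ∈ (∅ : Finset V) ∨ u ∈ D ∨ ∃ v ∈ D, G.Adj u v} :=
    ⟨univ, Finset.card_univ, huniv_conn, fun u => Or.inr (Or.inl (Finset.mem_univ u))⟩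
  obtain ⟨T, hTcard, hTconn, hTdom⟩ :
      ∃ D : Finset V, D.card = gammaC G ∅ ∧ (G.induce (D : Set V)).Connected ∧
        ∀ u, u ∈ (∅ : Finset V) ∨ u ∈ D ∨ ∃ v ∈ D, G.Adj u v := by
    have h := Nat.sInf_mem (⟨_, hmem_univ⟩ : Set.Nonempty {k | ∃ D : Finset V, D.card = k ∧
      (G.induce (D : Set V)).Connected ∧
      ∀ u, u ∈ (∅ : Finset V) ∨ u ∈ D ∨ ∃ v ∈ D, G.Adj u v})
    obtain ⟨D, h1, h2, h3⟩ := h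
    exact ⟨D, h1, h2, h3⟩
  have hTd : ∀ u, u ∈ T ∨ ∃ v ∈ T, G.Adj u v :=
    fun u => (hTdom u).resolve_left (Finset.notMem_empty u)
  have hA := (val_le_two_mul G T hTconn hTd (Fintype.card V) ∅ (by simp)).1 (Or.inl rfl)
  rw [Finset.sdiff_empty] at hA
  have hA' : gammaCG G ∅ ≤ ((2 * T.card - 1 : ℕ) : ℕ∞) := hA
  rcases eq_or_ne (gammaCG G {x}) ⊤ with htop | hfin
  · constructor
    · rw [htop, top_add]; exact le_top
    · rw [htop]
      have h2 : (2 : ℕ∞) * ⊤ = ⊤ := by simp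
      rw [h2]; exact le_top
  · obtain ⟨k, hk⟩ := WithTop.ne_top_iff_exists.mp hfin
    have hval : val G {x} true (Fintype.card V) ∅ ≤ (k : ℕ∞) := le_of_eq hk.symm
    obtain ⟨D', hsub, hcard, hconn', hdom'⟩ :=
      exists_cds G {x} (Fintype.card V) true ∅ k (Or.inl rfl) hval
    have hcard' : D'.card ≤ k := by simpa using hcard
    have hyx : y ≠ x := fun h => G.irrefl (h ▸ hxy)
    have hD'ne : D' ≠ ∅ := by
      rintro rfl
      have h := hdom' (Finset.mem_univ y)
      rw [Finset.mem_union] at h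
      rcases h with h | h
      · exact hyx (Finset.mem_singleton.mp h)
      · rw [mem_nbhd] at h; simp at h
    have hconnD' := hconn'.resolve_left hD'ne
    have hy := hdom' (Finset.mem_univ y)
    rw [Finset.mem_union] at hy
    rcases hy with h | hy
    · exact absurd (Finset.mem_singleton.mp h) hyx
    rw [mem_nbhd] at hy
    have hγle : gammaC G ∅ ≤ k + 1 := by
      rcases hy with hyD | ⟨p, hp, hyp⟩
      · have hdomall : ∀ u, u ∈ (∅ : Finset V) ∨ u ∈ D' ∨ ∃ v ∈ D', G.Adj u v := by
          intro u
          have h := hdom' (Finset.mem_univ u)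
          rw [Finset.mem_union] at h
          rcases h with h | h
          · rw [Finset.mem_singleton.mp h]
            exact Or.inr (Or.inr ⟨y, hyD, hxy⟩)
          · rw [mem_nbhd] at h; exact Or.inr h
        have hle : gammaC G ∅ ≤ D'.card := Nat.sInf_le ⟨D', rfl, hconnD', hdomall⟩
        omega
      · have hconnE := induce_connected_insert G hp hconnD' hyp
        have hdomall : ∀ u, u ∈ (∅ : Finset V) ∨ u ∈ insert y D' ∨
            ∃ v ∈ insert y D', G.Adj u v := by
          intro u
          have h := hdom' (Finset.mem_univ u)
          rw [Finset.mem_union] at h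
          rcases h with h | h
          · rw [Finset.mem_singleton.mp h]
            exact Or.inr (Or.inr ⟨y, Finset.mem_insert_self y D', hxy⟩)
          · rw [mem_nbhd] at h
            rcases h with h | ⟨v, hv, hadj⟩
            · exact Or.inr (Or.inl (Finset.mem_insert_of_mem h))
            · exact Or.inr (Or.inr ⟨v, Finset.mem_insert_of_mem hv, hadj⟩)
        have hle : gammaC G ∅ ≤ (insert y D').card :=
          Nat.sInf_le ⟨insert y D', rfl, hconnE, hdomall⟩
        have hci := Finset.card_insert_le y D'
        omega
    constructor
    · rw [← hk]
      have h1 : ((gammaC G ∅ : ℕ) : ℕ∞) ≤ ((k + 1 : ℕ) : ℕ∞) := Nat.cast_le.mpr hγle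
      simp only [Nat.cast_add, Nat.cast_one] at h1; exact h1
    · rw [← hk, tsub_le_iff_right]
      refine le_trans hA' ?_
      have h1 : (2 * T.card - 1 : ℕ) ≤ 2 * k + 1 := by
        have h2 : T.card ≤ k + 1 := by rw [hTcard]; exact hγle
        omega
      calc ((2 * T.card - 1 : ℕ) : ℕ∞) ≤ ((2 * k + 1 : ℕ) : ℕ∞) := Nat.cast_le.mpr h1
        _ = 2 * (k : ℕ∞) + 1 := by push_cast; ring
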